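/- arXiv:0704.0537 — 7 statements merged into one kernel-verified Lean document; each statement's English description precedes it below -/
import Mathlib

section
/- If m and r are integers with m ≥ 2 and r ≥ 2, then there are no integers a₁,...,a₅ satisfying both a₁²+⋯+a₅² = m² + r and a₁+⋯+a₅ = 3m + r − 2. -/
/-!
By Cauchy–Schwarz, `(∑ aᵢ)² ≤ 5 ∑ aᵢ²`, i.e. `(3m + r - 2)² ≤ 5 (m² + r)`. But
`(3m + r - 2)² - 5 (m² + r) = 4m² - 10 + (r - 2)(6m + r - 7)`, which is positive for `m, r ≥ 2`.
-/

theorem five_mul_sq_add_lt_sq (m r : ℤ) (hm : 2 ≤ m) (hr : 2 ≤ r) :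
    5 * (m ^ 2 + r) < (3 * m + r - 2) ^ 2 := by
  have hdiff : (3 * m + r - 2) ^ 2 - 5 * (m ^ 2 + r) =
      4 * m ^ 2 - 10 + (r - 2) * (6 * m + r - 7) := by
    ring
  nlinarith [mul_nonneg (sub_nonneg.2 hr) (show (0 : ℤ) ≤ 6 * m + r - 7 by linarith)]

/-- If `m ≥ 2` and `r ≥ 2` are integers, there are no integers `a₁,…,a₅` with
`∑ aᵢ² = m² + r` and `∑ aᵢ = 3m + r − 2`. -/
theorem stmt_0 (m r : ℤ) (hm : 2 ≤ m) (hr : 2 ≤ r) :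
    ¬ ∃ a : Fin 5 → ℤ,
      (∑ i, (a i) ^ 2 = m ^ 2 + r) ∧ (∑ i, a i = 3 * m + r - 2) := by
  rintro ⟨a, hsq, hsum⟩
  have hcs : (3 * m + r - 2) ^ 2 ≤ 5 * (m ^ 2 + r) := by
    simpa [hsq, hsum] using sq_sum_le_card_mul_sum_sq (s := Finset.univ) (f := a)
  exact (five_mul_sq_add_lt_sq m r hm hr).not_ge hcs
end

section
/- Let h₁:(x:y:z) ⇢ (μ·yz : xy : −xz) and h₂:(x:y:z) ⇢ (ν·yz(y−z) : xz(y+z) : xy(y+z)) be birational transformations of ℙ², with μ, ν ∈ ℂ*. Then h₁ and h₂ commute if and only if μ² = ν². -/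
/-!
Both automorphisms fix the constants and they commute on `y`, because `(-y)⁻¹ = -y⁻¹`; so they
commute iff they agree on `x`. A direct computation gives `σ₁ (σ₂ x) = (ν/μ) w` and
`σ₂ (σ₁ x) = (μ/ν) w` with `w = -x(y+1)/(y(y-1)) ≠ 0`, and `ν/μ = μ/ν` iff `μ² = ν²`.
-/

noncomputable section

/-- The function field `ℂ(x,y)` of the plane. -/
abbrev Kfield := FractionRing (MvPolynomial (Fin 2) ℂ)

/-- The inclusion of polynomials into `ℂ(x,y)`. -/
def ι : MvPolynomial (Fin 2) ℂ →+* Kfield := algebraMap _ _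

/-- The first affine coordinate `x`. -/
def Xv : Kfield := ι (MvPolynomial.X 0)

/-- The second affine coordinate `y`. -/
def Yv : Kfield := ι (MvPolynomial.X 1)

open MvPolynomial

theorem FractionRing.mvPolynomial_ringHom_ext {σ R S : Type*} [CommRing R] [IsDomain R]
    [Semiring S] {f g : FractionRing (MvPolynomial σ R) →+* S}
    (hC : ∀ c : R, f (algebraMap _ _ (C c : MvPolynomial σ R)) =
      g (algebraMap _ _ (C c : MvPolynomial σ R)))
    (hX : ∀ i : σ, f (algebraMap _ _ (X i : MvPolynomial σ R)) =
      g (algebraMap _ _ (X i : MvPolynomial σ R))) : f = g :=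
  IsLocalization.ringHom_ext (nonZeroDivisors _) (MvPolynomial.ringHom_ext hC hX)

theorem ι_ne_zero {p : MvPolynomial (Fin 2) ℂ} (hp : p ≠ 0) : ι p ≠ 0 :=
  (map_ne_zero_iff ι (IsFractionRing.injective _ _)).2 hp

theorem Xv_ne_zero : Xv ≠ 0 := ι_ne_zero (X_ne_zero 0)

theorem Yv_ne_zero : Yv ≠ 0 := ι_ne_zero (X_ne_zero 1)

theorem Yv_ne_ι_C (c : ℂ) : Yv ≠ ι (C c) := fun h => by
  simpa using congrArg (eval fun _ => c + 1) (IsFractionRing.injective _ Kfield h)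

theorem Yv_sub_one_ne_zero : Yv - 1 ≠ 0 :=
  sub_ne_zero.2 (by simpa using Yv_ne_ι_C 1)

theorem Yv_add_one_ne_zero : Yv + 1 ≠ 0 := by
  simpa [sub_eq_add_neg] using sub_ne_zero.2 (Yv_ne_ι_C (-1))

theorem ι_C_div_eq_ι_C_div_iff {μ ν : ℂ} (hμ : μ ≠ 0) (hν : ν ≠ 0) :
    ι (C ν) / ι (C μ) = ι (C μ) / ι (C ν) ↔ μ ^ 2 = ν ^ 2 := by
  have h := (ι.comp C).injective.eq_iff (a := ν / μ) (b := μ / ν)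
  simp only [map_div₀, RingHom.comp_apply] at h
  rw [h, div_eq_div_iff hμ hν]
  constructor <;> intro h <;> linear_combination -h

theorem commute_iff_apply_apply_Xv_eq {σ₁ σ₂ : RingAut Kfield}
    (hc₁ : ∀ c : ℂ, σ₁ (ι (C c)) = ι (C c)) (hc₂ : ∀ c : ℂ, σ₂ (ι (C c)) = ι (C c))
    (hY : σ₁ (σ₂ Yv) = σ₂ (σ₁ Yv)) : Commute σ₁ σ₂ ↔ σ₁ (σ₂ Xv) = σ₂ (σ₁ Xv) := by
  refine ⟨fun h => congrArg (· Xv) h.eq, fun hX => ?_⟩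
  refine RingEquiv.toRingHom_injective (FractionRing.mvPolynomial_ringHom_ext (fun c => ?_) ?_)
  · show σ₁ (σ₂ (ι (C c))) = σ₂ (σ₁ (ι (C c)))
    rw [hc₂, hc₁, hc₂]
  · intro i
    fin_cases i
    exacts [hX, hY]

theorem apply_ι_C_mul_Yv_sub_one_div_eq {μ ν : ℂ} {σ₁ : RingAut Kfield}
    (hc₁ : ∀ c : ℂ, σ₁ (ι (C c)) = ι (C c))
    (h₁x : σ₁ Xv = -(ι (C μ) * Yv) / Xv) (h₁y : σ₁ Yv = -Yv) :
    σ₁ (ι (C ν) * (Yv - 1) / (Xv * (Yv + 1))) =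
      ι (C ν) / ι (C μ) * (-(Xv * (Yv + 1)) / (Yv * (Yv - 1))) := by
  have := Xv_ne_zero; have := Yv_ne_zero; have := Yv_sub_one_ne_zero; have := Yv_add_one_ne_zero
  simp only [map_div₀, map_mul, map_sub, map_add, map_one, hc₁, h₁x, h₁y]
  rw [show -Yv + 1 = -(Yv - 1) by ring, show -Yv - 1 = -(Yv + 1) by ring]
  field_simp

theorem apply_neg_ι_C_mul_Yv_div_Xv_eq {μ ν : ℂ} {σ₂ : RingAut Kfield}
    (hc₂ : ∀ c : ℂ, σ₂ (ι (C c)) = ι (C c))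
    (h₂x : σ₂ Xv = ι (C ν) * (Yv - 1) / (Xv * (Yv + 1))) (h₂y : σ₂ Yv = Yv⁻¹) :
    σ₂ (-(ι (C μ) * Yv) / Xv) = ι (C μ) / ι (C ν) * (-(Xv * (Yv + 1)) / (Yv * (Yv - 1))) := by
  have := Xv_ne_zero; have := Yv_ne_zero; have := Yv_sub_one_ne_zero; have := Yv_add_one_ne_zero
  simp only [map_div₀, map_mul, map_neg, hc₂, h₂x, h₂y]
  field_simp

/-- The birational maps `h₁:(x:y:z) ⇢ (μ·yz:xy:−xz)` and
`h₂:(x:y:z) ⇢ (ν·yz(y−z):xz(y+z):xy(y+z))` of `ℙ²` correspond, in the affine chart `z = 1`,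
to the `ℂ`-automorphisms `σ₁ : x ↦ −μy/x, y ↦ −y` and `σ₂ : x ↦ ν(y−1)/(x(y+1)), y ↦ 1/y`
of `ℂ(x,y)`. -/
theorem stmt_9 (μ ν : ℂ) (hμ : μ ≠ 0) (hν : ν ≠ 0) (σ₁ σ₂ : RingAut Kfield)
    (hc₁ : ∀ c : ℂ, σ₁ (ι (MvPolynomial.C c)) = ι (MvPolynomial.C c))
    (hc₂ : ∀ c : ℂ, σ₂ (ι (MvPolynomial.C c)) = ι (MvPolynomial.C c))
    (h₁x : σ₁ Xv = -(ι (MvPolynomial.C μ) * Yv) / Xv) (h₁y : σ₁ Yv = -Yv)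
    (h₂x : σ₂ Xv = ι (MvPolynomial.C ν) * (Yv - 1) / (Xv * (Yv + 1)))
    (h₂y : σ₂ Yv = Yv⁻¹) :
    Commute σ₁ σ₂ ↔ μ ^ 2 = ν ^ 2 := by
  have hY : σ₁ (σ₂ Yv) = σ₂ (σ₁ Yv) := by
    rw [h₂y, h₁y, map_inv₀, h₁y, map_neg, h₂y]
    exact inv_neg
  have hw : -(Xv * (Yv + 1)) / (Yv * (Yv - 1)) ≠ 0 :=
    div_ne_zero (neg_ne_zero.2 (mul_ne_zero Xv_ne_zero Yv_add_one_ne_zero))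
      (mul_ne_zero Yv_ne_zero Yv_sub_one_ne_zero)
  rw [commute_iff_apply_apply_Xv_eq hc₁ hc₂ hY, h₂x, h₁x,
    apply_ι_C_mul_Yv_sub_one_div_eq hc₁ h₁x h₁y, apply_neg_ι_C_mul_Yv_div_Xv_eq hc₂ h₂x h₂y,
    mul_left_inj' hw, ι_C_div_eq_ι_C_div_iff hμ hν]

end
end

section
/- The birational transformation h:(x:y:z) ⇢ (xy : y(x−z) : x(y−z)) of ℙ² has order 5, and its fixed points in ℙ² are exactly the two points (ζ+1 : ζ : 1) with ζ² − ζ − 1 = 0. -/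
/-!
In the chart `z = 1` the automorphism `σ` moves the pair of coordinates `(x, y)` by the rational
map `(a, b) ↦ (b / (b - 1), b (a - 1) / (a (b - 1)))`; being a ring homomorphism, `σ` commutes with
this map, so `(σⁿ x, σⁿ y)` is the `n`-th point of the orbit of the generic point `(x, y)`. A direct
computation shows that this orbit closes up after five steps, so `σ⁵` fixes `ℂ[x, y]` and hence
`ℂ(x, y)`, while `σ x ≠ x`. For the fixed points, `h v = c v` forces `v₀ ≠ 0`, then `c = v₁`,
`v₀ = v₁ + v₂`, and the last coordinate gives `v₁² - v₁ v₂ - v₂² = 0`.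
-/

noncomputable section

section AffineStep

variable {F : Type*} [Field F]

def affineStep (p : F × F) : F × F :=
  (p.2 / (p.2 - 1), p.2 * (p.1 - 1) / (p.1 * (p.2 - 1)))

theorem affineStep_iterate_five {a b : F} (ha : a ≠ 0) (hb : b ≠ 0) (ha1 : a - 1 ≠ 0)
    (hb1 : b - 1 ≠ 0) (hab : a - b ≠ 0) : affineStep^[5] (a, b) = (a, b) := by
  have step₁ : affineStep (a, b) = (b / (b - 1), b * (a - 1) / (a * (b - 1))) := rfl
  have step₂ : affineStep (b / (b - 1), b * (a - 1) / (a * (b - 1))) =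
      (b * (a - 1) / (a - b), (a - 1) / (a - b)) := by
    have hy1 : b * (a - 1) / (a * (b - 1)) - 1 = (a - b) / (a * (b - 1)) := by
      field_simp; ring
    rw [affineStep, hy1]
    ext
    · field_simp
    · field_simp; ring
  have step₃ : affineStep (b * (a - 1) / (a - b), (a - 1) / (a - b)) =
      ((a - 1) / (b - 1), a / b) := by
    have hy1 : (a - 1) / (a - b) - 1 = (b - 1) / (a - b) := by
      field_simp; ring
    rw [affineStep, hy1]
    ext
    · field_simp
    · field_simp; ring
  have step₄ : affineStep ((a - 1) / (b - 1), a / b) = (a / (a - b), a / (a - 1)) := by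
    have hy1 : a / b - 1 = (a - b) / b := by
      field_simp
    rw [affineStep, hy1]
    ext
    · field_simp
    · field_simp; ring
  have step₅ : affineStep (a / (a - b), a / (a - 1)) = (a, b) := by
    have hy1 : a / (a - 1) - 1 = 1 / (a - 1) := by
      field_simp; ring
    rw [affineStep, hy1]
    ext
    · field_simp
    · field_simp; ring
  simp only [Function.iterate_succ_apply', Function.iterate_zero_apply]
  rw [step₁, step₂, step₃, step₄, step₅]

theorem map_affineStep {L : Type*} [Field L] (f : F →+* L) (p : F × F) :
    Prod.map f f (affineStep p) = affineStep (Prod.map f f p) := by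
  simp [affineStep, map_div₀]

theorem RingAut.pow_apply_eq_affineStep_iterate {σ : RingAut F} {a b : F}
    (h : (σ a, σ b) = affineStep (a, b)) (n : ℕ) :
    ((σ ^ n) a, (σ ^ n) b) = affineStep^[n] (a, b) := by
  have hcomm : Function.Commute (Prod.map σ σ) affineStep := fun p =>
    map_affineStep (σ : F →+* F) p
  simpa [RingAut.coe_pow, Prod.map_iterate] using hcomm.iterate_eq_of_map_eq n (x := (a, b)) h

end AffineStep

section QuadraticMap

variable {F : Type*} [Field F]

def quadraticMap (v : Fin 3 → F) : Fin 3 → F :=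
  ![v 0 * v 1, v 1 * (v 0 - v 2), v 0 * (v 1 - v 2)]

theorem quadraticMap_smul (c : F) (v : Fin 3 → F) :
    quadraticMap (c • v) = c ^ 2 • quadraticMap v := by
  ext i; fin_cases i <;> simp [quadraticMap] <;> ring

theorem quadraticMap_goldenPoint {ζ : F} (hζ : ζ ^ 2 - ζ - 1 = 0) :
    quadraticMap ![ζ + 1, ζ, 1] = ζ • ![ζ + 1, ζ, 1] := by
  ext i; fin_cases i <;> simp [quadraticMap]
  · ring
  · linear_combination hζ

theorem exists_goldenPoint_of_quadraticMap_eq_smul {v : Fin 3 → F} {c : F} (hv : v ≠ 0)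
    (hc : c ≠ 0) (h : quadraticMap v = c • v) :
    ∃ ζ : F, ζ ^ 2 - ζ - 1 = 0 ∧ ∃ c : F, c ≠ 0 ∧ v = c • ![ζ + 1, ζ, 1] := by
  have h0 : v 0 * v 1 = c * v 0 := by simpa [quadraticMap] using congrFun h 0
  have h1 : v 1 * (v 0 - v 2) = c * v 1 := by simpa [quadraticMap] using congrFun h 1
  have h2 : v 0 * (v 1 - v 2) = c * v 2 := by simpa [quadraticMap] using congrFun h 2
  have hv0 : v 0 ≠ 0 := by
    intro hv0
    have hv2 : v 2 = 0 := by simpa [hv0, hc] using h2.symm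
    have hv1 : v 1 = 0 := by simpa [hv0, hv2, hc] using h1.symm
    exact hv (funext fun i => by fin_cases i <;> assumption)
  obtain rfl : v 1 = c := mul_left_cancel₀ hv0 (by linear_combination h0)
  have hv0_eq : v 0 = v 1 + v 2 := by
    linear_combination mul_left_cancel₀ hc (h1.trans (mul_comm _ _))
  have hv2 : v 2 ≠ 0 := by
    intro hv2
    simp [hv2, hv0] at h2
    exact hc h2
  refine ⟨v 1 / v 2, ?_, v 2, hv2, ?_⟩
  · field_simp
    linear_combination h2 - (v 1 - v 2) * hv0_eq
  · ext i; fin_cases i <;> simp [hv0_eq] <;> field_simp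

theorem quadraticMap_eq_smul_iff {v : Fin 3 → F} (hv : v ≠ 0) :
    (∃ c : F, c ≠ 0 ∧ quadraticMap v = c • v) ↔
      ∃ ζ : F, ζ ^ 2 - ζ - 1 = 0 ∧ ∃ c : F, c ≠ 0 ∧ v = c • ![ζ + 1, ζ, 1] := by
  constructor
  · rintro ⟨c, hc, h⟩
    exact exists_goldenPoint_of_quadraticMap_eq_smul hv hc h
  · rintro ⟨ζ, hζ, c, hc, rfl⟩
    have hζ0 : ζ ≠ 0 := by rintro rfl; norm_num at hζ
    refine ⟨c * ζ, mul_ne_zero hc hζ0, ?_⟩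
    rw [quadraticMap_smul, quadraticMap_goldenPoint hζ, smul_smul, smul_smul]
    ring_nf

end QuadraticMap

open MvPolynomial in
theorem RingAut.eq_one_of_forall_C_X {σ R S : Type*} [CommSemiring R] [CommSemiring S]
    [Algebra (MvPolynomial σ R) S] (M : Submonoid (MvPolynomial σ R)) [IsLocalization M S]
    {τ : RingAut S}
    (hC : ∀ c, τ (algebraMap (MvPolynomial σ R) S (C c)) = algebraMap (MvPolynomial σ R) S (C c))
    (hX : ∀ i, τ (algebraMap (MvPolynomial σ R) S (X i)) = algebraMap (MvPolynomial σ R) S (X i)) :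
    τ = 1 :=
  RingEquiv.toRingHom_injective <| IsLocalization.ringHom_ext M <| ringHom_ext hC hX

section GenericPoint

open MvPolynomial

theorem ι_ne_zero_of_eval_ne_zero (x : Fin 2 → ℂ) {p : MvPolynomial (Fin 2) ℂ}
    (h : eval x p ≠ 0) : ι p ≠ 0 := by
  intro hp
  obtain rfl : p = 0 := IsFractionRing.injective _ Kfield (hp.trans (map_zero ι).symm)
  exact h (map_zero _)

theorem Xv_sub_one_ne_zero : Xv - 1 ≠ 0 := by
  rw [Xv, ← map_one ι, ← map_sub]
  exact ι_ne_zero_of_eval_ne_zero ![0, 0] (by simp)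

theorem Xv_sub_Yv_ne_zero : Xv - Yv ≠ 0 := by
  rw [Xv, Yv, ← map_sub]
  exact ι_ne_zero_of_eval_ne_zero ![1, 0] (by simp)

theorem Xv_mul_Yv_sub_one_ne_Yv : Xv * (Yv - 1) ≠ Yv := by
  rw [← sub_ne_zero, Xv, Yv, ← map_one ι, ← map_sub, ← map_mul, ← map_sub]
  exact ι_ne_zero_of_eval_ne_zero ![0, 1] (by simp)

end GenericPoint

/-- The quadratic birational map `h : (x:y:z) ⇢ (xy : y(x−z) : x(y−z))` of `ℙ²` — which in the
affine chart `z = 1` corresponds to the `ℂ`-automorphism `σ : x ↦ y/(y−1), y ↦ y(x−1)/(x(y−1))`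
of `ℂ(x,y)` — has order `5`, and its fixed points in `ℙ²` (points outside the base locus, i.e.
with nonzero image vector, that are sent to a nonzero multiple of themselves) are exactly
the two points `(ζ+1 : ζ : 1)` with `ζ² − ζ − 1 = 0`. -/
theorem stmt_10 (σ : RingAut Kfield)
    (hc : ∀ c : ℂ, σ (ι (MvPolynomial.C c)) = ι (MvPolynomial.C c))
    (hx : σ Xv = Yv / (Yv - 1))
    (hy : σ Yv = Yv * (Xv - 1) / (Xv * (Yv - 1))) :
    orderOf σ = 5 ∧
    ∀ v : Fin 3 → ℂ, v ≠ 0 →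
      (![v 0 * v 1, v 1 * (v 0 - v 2), v 0 * (v 1 - v 2)] : Fin 3 → ℂ) ≠ 0 →
      ((∃ c : ℂ, c ≠ 0 ∧
          (![v 0 * v 1, v 1 * (v 0 - v 2), v 0 * (v 1 - v 2)] : Fin 3 → ℂ) = c • v) ↔
        ∃ ζ : ℂ, ζ ^ 2 - ζ - 1 = 0 ∧ ∃ c : ℂ, c ≠ 0 ∧ v = c • ![ζ + 1, ζ, 1]) := by
  have hfix : ((σ ^ 5) Xv, (σ ^ 5) Yv) = (Xv, Yv) :=
    (RingAut.pow_apply_eq_affineStep_iterate (by rw [hx, hy]; rfl) 5).trans <|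
      affineStep_iterate_five Xv_ne_zero Yv_ne_zero Xv_sub_one_ne_zero Yv_sub_one_ne_zero
        Xv_sub_Yv_ne_zero
  have h5 : σ ^ 5 = 1 := by
    refine RingAut.eq_one_of_forall_C_X (nonZeroDivisors (MvPolynomial (Fin 2) ℂ))
      (fun c => ?_) (fun i => ?_)
    · rw [RingAut.coe_pow]
      exact Function.iterate_fixed (hc c) 5
    · fin_cases i
      exacts [congrArg Prod.fst hfix, congrArg Prod.snd hfix]
  have hσ : σ ≠ 1 := by
    rintro rfl
    rw [RingAut.one_apply, eq_div_iff Yv_sub_one_ne_zero] at hx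
    exact Xv_mul_Yv_sub_one_ne_Yv hx
  have : Fact (Nat.Prime 5) := ⟨Nat.prime_five⟩
  exact ⟨orderOf_eq_prime h5 hσ, fun v hv _ => quadraticMap_eq_smul_iff hv⟩

end
end

section
/- The birational map ĝ:(x:y:z) ⇢ (xz : xy : yz) of ℙ² has order 6 (as a birational transformation), and its unique fixed point in ℙ² is (1:1:1). -/
/-!
Write `x, y` for the affine coordinates. Then `σ² x = 1/y`, `σ³ x = 1/x` and `σ³ y = 1/y`,
so `σ³` is the involution `(x, y) ↦ (1/x, 1/y)` and `σ⁶ = 1`; as `σ² x ≠ x` and `σ³ x ≠ x`,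
the order is exactly `6`. A fixed point `(a:b:c)` of `ĝ` satisfies `ac = ka`, `ab = kb`,
`bc = kc` with `k ≠ 0`, which forces `a ≠ 0` and then `c = k`, `b = k`, `a = k`.
-/

noncomputable section

open MvPolynomial

theorem FractionRing.ringAut_eq_one_of_fixes_C_X {s R : Type*} [CommRing R] [IsDomain R]
    (τ : RingAut (FractionRing (MvPolynomial s R)))
    (hC : ∀ c, τ (algebraMap (MvPolynomial s R) _ (C c)) = algebraMap (MvPolynomial s R) _ (C c))
    (hX : ∀ i, τ (algebraMap (MvPolynomial s R) _ (X i)) = algebraMap (MvPolynomial s R) _ (X i)) :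
    τ = 1 := by
  have h : τ.toRingHom = RingHom.id _ :=
    IsLocalization.ringHom_ext (nonZeroDivisors (MvPolynomial s R)) <|
      MvPolynomial.ringHom_ext (f := τ.toRingHom.comp (algebraMap _ _)) hC hX
  ext a
  exact RingHom.congr_fun h a

theorem ι_injective : Function.Injective ι := IsFractionRing.injective _ _

theorem ι_X_ne_zero (i : Fin 2) : ι (X i) ≠ 0 :=
  (map_ne_zero_iff ι ι_injective).mpr (X_ne_zero i)

theorem ι_X_inv_ne_ι_X (i j : Fin 2) : (ι (X i))⁻¹ ≠ ι (X j) := by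
  intro h
  have h1 : ι (X (R := ℂ) j * X i) = ι 1 := by
    rw [map_mul, map_one, mul_eq_one_iff_eq_inv₀ (ι_X_ne_zero i), h]
  simpa using congrArg (eval 0) (ι_injective h1)

section Orbit

variable {σ : RingAut Kfield} (hx : σ Xv = Xv / Yv) (hy : σ Yv = Xv)
include hx hy

theorem sq_apply_Xv : (σ ^ 2) Xv = Yv⁻¹ := by
  change σ (σ Xv) = _
  rw [hx, map_div₀, hx, hy, div_right_comm, div_self Xv_ne_zero, one_div]

theorem pow_three_apply_Xv : (σ ^ 3) Xv = Xv⁻¹ := by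
  change σ ((σ ^ 2) Xv) = _
  rw [sq_apply_Xv hx hy, map_inv₀, hy]

theorem pow_three_apply_Yv : (σ ^ 3) Yv = Yv⁻¹ := by
  change σ (σ (σ Yv)) = _
  rw [hy, hx, map_div₀, hx, hy, div_right_comm, div_self Xv_ne_zero, one_div]

theorem sq_ne_one : σ ^ 2 ≠ 1 := by
  intro h
  have h2 := sq_apply_Xv hx hy
  rw [h] at h2
  exact ι_X_inv_ne_ι_X 1 0 h2.symm

theorem pow_three_ne_one : σ ^ 3 ≠ 1 := by
  intro h
  have h3 := pow_three_apply_Xv hx hy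
  rw [h] at h3
  exact ι_X_inv_ne_ι_X 0 0 h3.symm

theorem pow_six_eq_one (hc : ∀ c : ℂ, σ (ι (C c)) = ι (C c)) : σ ^ 6 = 1 := by
  have hinvol (a : Kfield) (ha : (σ ^ 3) a = a⁻¹) : (σ ^ 6) a = a := by
    change (σ ^ 3) ((σ ^ 3) a) = a
    rw [ha, map_inv₀, ha, inv_inv]
  refine FractionRing.ringAut_eq_one_of_fixes_C_X _ (fun c => ?_) <|
    Fin.forall_fin_two.mpr
      ⟨hinvol _ (pow_three_apply_Xv hx hy), hinvol _ (pow_three_apply_Yv hx hy)⟩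
  change σ (σ (σ (σ (σ (σ (ι (C c))))))) = ι (C c)
  simp only [hc]

theorem orderOf_eq_six (hc : ∀ c : ℂ, σ (ι (C c)) = ι (C c)) : orderOf σ = 6 := by
  refine orderOf_eq_of_pow_and_pow_div_prime (by norm_num) (pow_six_eq_one hx hy hc)
    fun p hp hp6 => ?_
  rcases (Nat.Prime.dvd_mul hp).mp (show p ∣ 2 * 3 from hp6) with h2 | h3
  · rw [(Nat.prime_dvd_prime_iff_eq hp Nat.prime_two).mp h2]
    exact pow_three_ne_one hx hy
  · rw [(Nat.prime_dvd_prime_iff_eq hp Nat.prime_three).mp h3]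
    exact sq_ne_one hx hy

end Orbit

/-- `ĝ` in homogeneous coordinates. -/
def ghat {K : Type*} [Mul K] (v : Fin 3 → K) : Fin 3 → K := ![v 0 * v 2, v 0 * v 1, v 1 * v 2]

theorem ghat_smul_one {K : Type*} [Monoid K] (k : K) :
    ghat (k • ![(1 : K), 1, 1]) = k • k • ![1, 1, 1] := by
  funext i
  fin_cases i <;> simp [ghat]

section FixedPoint

variable {K : Type*} [CommRing K] [IsDomain K]

theorem eq_smul_one_of_ghat_eq_smul {v : Fin 3 → K} {k : K} (hk : k ≠ 0) (hv : v ≠ 0)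
    (h : ghat v = k • v) : v = k • ![(1 : K), 1, 1] := by
  have e0 : v 0 * v 2 = k * v 0 := congrFun h 0
  have e1 : v 0 * v 1 = k * v 1 := congrFun h 1
  have e2 : v 1 * v 2 = k * v 2 := congrFun h 2
  have hv0 : v 0 ≠ 0 := by
    intro h0
    have hv1 : v 1 = 0 := by simpa [h0, hk] using e1.symm
    have hv2 : v 2 = 0 := by simpa [hv1, hk] using e2.symm
    exact hv (funext fun i => by fin_cases i <;> assumption)
  have hv2 : v 2 = k := mul_left_cancel₀ hv0 (e0.trans (mul_comm k (v 0)))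
  have hv1 : v 1 = k := mul_right_cancel₀ hk (by rw [hv2] at e2; exact e2)
  have hv0k : v 0 = k := mul_right_cancel₀ (by rwa [hv1]) e1
  funext i
  fin_cases i <;> simp [hv0k, hv1, hv2]

end FixedPoint

/-- In the affine chart `z = 1`, `ĝ` is the `ℂ`-automorphism `σ : x ↦ x/y, y ↦ x` of
`ℂ(x,y)`; points of `ℙ²` are nonzero vectors up to a nonzero scalar. -/
theorem stmt_11 (σ : RingAut Kfield)
    (hc : ∀ c : ℂ, σ (ι (MvPolynomial.C c)) = ι (MvPolynomial.C c))
    (hx : σ Xv = Xv / Yv) (hy : σ Yv = Xv) :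
    orderOf σ = 6 ∧
    ∀ v : Fin 3 → ℂ, v ≠ 0 →
      (![v 0 * v 2, v 0 * v 1, v 1 * v 2] : Fin 3 → ℂ) ≠ 0 →
      ((∃ c : ℂ, c ≠ 0 ∧ (![v 0 * v 2, v 0 * v 1, v 1 * v 2] : Fin 3 → ℂ) = c • v) ↔
        ∃ c : ℂ, c ≠ 0 ∧ v = c • ![1, 1, 1]) := by
  refine ⟨orderOf_eq_six hx hy hc, fun v hv _ => ⟨?_, ?_⟩⟩
  · rintro ⟨k, hk, h⟩
    exact ⟨k, hk, eq_smul_one_of_ghat_eq_smul hk hv h⟩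
  · rintro ⟨k, hk, rfl⟩
    exact ⟨k, hk, ghat_smul_one k⟩

end
end

section
/- Let g ∈ Aut(S,π) be an automorphism of finite order of a conic bundle (S,π) whose action on the base ℙ¹ has even order n, and suppose gⁿ is an involution acting trivially on the base twisting exactly 2k > 0 singular fibres, none of which is twisted by g, while g twists r ∈ {1,2} singular fibres. Then n divides 2k, and 2k/n ≡ r (mod 2). -/
/-! The powers of `g` permute the `2k` fibres twisted by `gⁿ` freely, in orbits of length `n`,
so `n ∣ 2k`. For the parity, apply `φ` to `K = (m - 2) f - 2 s + R`: the orbit sum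
`∑ⱼ φʲ Fᵢ` moves by `f - 2 Fᵢ` and each `Lᵢ` by `f - 2 Lᵢ`, so `φ K = K` forces
`(t + r) f ∈ 2 Pic` with `t = 2k/n`; intersecting with the section `s` (`s · f = 1`) shows that
`t + r` is even. -/

open Finset

theorem MulAction.card_dvd_card_of_stabilizer_eq_bot {G X : Type*} [Group G] [MulAction G X]
    (h : ∀ x : X, stabilizer G x = ⊥) : Nat.card G ∣ Nat.card X := by
  rw [Nat.card_congr (selfEquivOrbitsQuotientProd h), Nat.card_prod]
  exact dvd_mul_left _ _

namespace Equiv.Perm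

variable {α : Type*} {σ : Perm α} {n : ℕ}

theorem orderOf_eq_of_pow_apply_ne [Nonempty α] (hn0 : 0 < n) (hσn : σ ^ n = 1)
    (hfree : ∀ j, 0 < j → j < n → ∀ x, (σ ^ j) x ≠ x) : orderOf σ = n := by
  obtain ⟨x⟩ := ‹Nonempty α›
  refine (orderOf_eq_iff hn0).2 ⟨hσn, fun j hjn hj0 hσj => hfree j hj0 hjn x ?_⟩
  rw [hσj, one_apply]

theorem stabilizer_zpowers_eq_bot (hσ : IsOfFinOrder σ)
    (hfree : ∀ j, 0 < j → j < orderOf σ → ∀ x, (σ ^ j) x ≠ x) (x : α) :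
    MulAction.stabilizer (Subgroup.zpowers σ) x = ⊥ := by
  classical
  refine (Subgroup.eq_bot_iff_forall _).2 fun ⟨g, hg⟩ hgx => ?_
  obtain ⟨j, hj, rfl⟩ := Finset.mem_image.1 (hσ.mem_zpowers_iff_mem_range_orderOf.1 hg)
  obtain rfl | hj0 := j.eq_zero_or_pos
  · rfl
  · exact absurd hgx (hfree j hj0 (Finset.mem_range.1 hj) x)

theorem dvd_card_of_pow_eq_one_of_pow_apply_ne (hn0 : 0 < n) (hσn : σ ^ n = 1)
    (hfree : ∀ j, 0 < j → j < n → ∀ x, (σ ^ j) x ≠ x) : n ∣ Nat.card α := by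
  cases isEmpty_or_nonempty α
  · rw [Nat.card_of_isEmpty]
    exact dvd_zero n
  · have horder := orderOf_eq_of_pow_apply_ne hn0 hσn hfree
    have hfin : IsOfFinOrder σ := isOfFinOrder_iff_pow_eq_one.2 ⟨n, hn0, hσn⟩
    rw [← horder, ← Nat.card_zpowers]
    exact MulAction.card_dvd_card_of_stabilizer_eq_bot
      (stabilizer_zpowers_eq_bot hfin (horder ▸ hfree))

end Equiv.Perm

namespace AddAut

variable {A : Type*} [AddCommGroup A] (φ : AddAut A)

theorem apply_sum_range_nsmul_apply (n : ℕ) (x : A) :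
    φ (∑ j ∈ range n, (j • φ) x) = ∑ j ∈ range n, (j • φ) x + (n • φ) x - x := by
  have hshift : ∀ j : ℕ, φ ((j • φ) x) = ((j + 1) • φ) x := fun j => by
    rw [succ_nsmul', add_apply]
  rw [map_sum, Finset.sum_congr rfl fun j _ => hshift j, eq_sub_iff_add_eq,
    ← Finset.sum_range_succ (fun j => (j • φ) x), Finset.sum_range_succ', zero_nsmul, zero_apply]

theorem apply_sub_self_of_twists {n t r : ℕ} {f : A} {F : Fin t → A} {L : Fin r → A}
    (hφL : ∀ i, φ (L i) = f - L i) (hφF : ∀ i, (n • φ) (F i) = f - F i) :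
    φ ((∑ i, ∑ j ∈ range n, (j • φ) (F i)) + ∑ i, L i) -
        ((∑ i, ∑ j ∈ range n, (j • φ) (F i)) + ∑ i, L i) =
      (t + r) • f - 2 • (∑ i, F i + ∑ i, L i) := by
  have horbit : ∀ i, φ (∑ j ∈ range n, (j • φ) (F i)) =
      ∑ j ∈ range n, (j • φ) (F i) + f - 2 • F i := fun i => by
    rw [apply_sum_range_nsmul_apply, hφF, two_nsmul]
    abel
  rw [map_add, map_sum, map_sum, Finset.sum_congr rfl fun i _ => horbit i,
    Finset.sum_congr rfl fun i _ => hφL i]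
  simp only [Finset.sum_add_distrib, Finset.sum_sub_distrib, Finset.sum_const, Finset.card_univ,
    Fintype.card_fin, ← Finset.smul_sum, add_nsmul, nsmul_add]
  abel

theorem exists_add_nsmul_eq_two_nsmul {n t r : ℕ} {f s K : A} {m : ℤ}
    {F : Fin t → A} {L : Fin r → A} (hφf : φ f = f) (hφL : ∀ i, φ (L i) = f - L i)
    (hφF : ∀ i, (n • φ) (F i) = f - F i)
    (hK : K = (m - 2) • f - (2 : ℤ) • s +
      ((∑ i, ∑ j ∈ range n, (j • φ) (F i)) + ∑ i, L i))
    (hφK : φ K = K) :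
    ∃ D : A, (t + r) • f = 2 • D := by
  set R := (∑ i, ∑ j ∈ range n, (j • φ) (F i)) + ∑ i, L i
  have hR : φ R - R = 2 • (φ s - s) := by
    have := hφK
    rw [hK, map_add, map_sub, map_zsmul, map_zsmul, hφf] at this
    rw [← sub_eq_zero] at this ⊢
    rw [← this, two_zsmul, two_zsmul, two_nsmul]
    abel
  refine ⟨φ s - s + (∑ i, F i + ∑ i, L i), ?_⟩
  rw [nsmul_add, ← hR, apply_sub_self_of_twists φ hφL hφF]
  abel

end AddAut

theorem stmt_13_general {Pic : Type*} [AddCommGroup Pic]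
    (n k r : ℕ) (hn0 : 0 < n)
    (σ : Equiv.Perm (Fin (2 * k)))
    (hσn : σ ^ n = 1)
    (hfree : ∀ j : ℕ, 0 < j → j < n → ∀ x, (σ ^ j) x ≠ x)
    (B : Pic →+ Pic →+ ℤ)
    (φ : AddAut Pic)
    (f s K : Pic) (m : ℤ)
    (F : Fin (2 * k / n) → Pic) (L : Fin r → Pic)
    (hφf : φ f = f)
    (hφL : ∀ i, φ (L i) = f - L i)
    (hφF : ∀ i, (n • φ) (F i) = f - F i)
    (hK : K = (m - 2) • f - (2 : ℤ) • s +
      ((∑ i, ∑ j ∈ Finset.range n, (j • φ) (F i)) + ∑ i, L i))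
    (hφK : φ K = K)
    (hBsf : B s f = 1) :
    (n ∣ 2 * k) ∧ (2 * k / n) % 2 = r % 2 := by
  refine ⟨by simpa using σ.dvd_card_of_pow_eq_one_of_pow_apply_ne hn0 hσn hfree, ?_⟩
  obtain ⟨D, hD⟩ := φ.exists_add_nsmul_eq_two_nsmul hφf hφL hφF hK hφK
  have hparity := congrArg (B s) hD
  simp only [map_nsmul, hBsf, nsmul_eq_mul, mul_one] at hparity
  omega

/-- Let `g` be a finite-order automorphism of a conic bundle `(S,π)` acting with even order
`n` on the base, such that `gⁿ` is an involution acting trivially on the base which twists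
exactly `2k > 0` singular fibres (none of them twisted by `g`), while `g` itself twists
`r ∈ {1,2}` singular fibres.  Then `n ∣ 2k` and `2k/n ≡ r (mod 2)`.

The geometric situation is encoded by its combinatorial and Picard-theoretic data, exactly
as used in the proof: the cyclic group generated by the action `σ` of `g` on the set of the
`2k` fibres twisted by `gⁿ` acts freely with `σⁿ = 1`; on `Pic S` (with intersection form
`B`), the action `φ` of `g` fixes the fibre class `f` and the canonical class `K`, sends each
component `Lᵢ` of a fibre twisted by `g` to `f − Lᵢ`, sends the chosen components `Fᵢ` of a
set of `⟨g⟩`-orbit representatives of the fibres twisted by `gⁿ` to `f − Fᵢ` under `φⁿ`, and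
`K = (m−2)f − 2s + R` where `s` is (the class of) a section with `B s f = 1` and `R` is the
sum of all these components. -/
theorem stmt_13 {Pic : Type*} [AddCommGroup Pic]
    (n k r : ℕ) (hn : Even n) (hn0 : 0 < n) (hk : 0 < k) (hr : r = 1 ∨ r = 2)
    (σ : Equiv.Perm (Fin (2 * k)))
    (hσn : σ ^ n = 1)
    (hfree : ∀ j : ℕ, 0 < j → j < n → ∀ x, (σ ^ j) x ≠ x)
    (B : Pic →+ Pic →+ ℤ)
    (φ : AddAut Pic)
    (f s K : Pic) (m : ℤ)
    (F : Fin (2 * k / n) → Pic) (L : Fin r → Pic)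
    (hφf : φ f = f)
    (hφL : ∀ i, φ (L i) = f - L i)
    (hφF : ∀ i, (n • φ) (F i) = f - F i)
    (hK : K = (m - 2) • f - (2 : ℤ) • s +
      ((∑ i, ∑ j ∈ Finset.range n, (j • φ) (F i)) + ∑ i, L i))
    (hφK : φ K = K)
    (hBsf : B s f = 1) :
    (n ∣ 2 * k) ∧ (2 * k / n) % 2 = r % 2 :=
  stmt_13_general n k r hn0 σ hσn hfree B φ f s K m F L hφf hφL hφF hK hφK hBsf
end

section
/- Let (S,π) be a conic bundle, not isomorphic to a Hirzebruch surface (i.e., π has at least one singular fibre), let −n be the minimal self-intersection of sections of π, and let r be the number of singular fibres. If there exist two distinct sections of π with self-intersection −n, then r ≥ 2n. -/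
/-!
Write `t·f = 1`, `t·s = d` and `t·Fᵢ = aᵢ` for a second section `t` with `t² = -n`. Since
`s, f, F₁, …, F_r` span `Pic`, the pairing is determined by these coordinates, which gives
`t² = 2d + n - Σ aᵢ²`, hence `Σ aᵢ² = 2(d + n)`; adjunction gives `Σ aᵢ = 2(d + n)`.
For integers `aᵢ ≤ aᵢ²`, so equality of the two sums forces `aᵢ ∈ {0, 1}` and
`2(d + n) ≤ r`. Finally `d = t·s ≥ 0` because `t ≠ s`.
-/

theorem Finset.sum_le_card_of_sum_sq_eq_sum {ι : Type*} (s : Finset ι) (a : ι → ℤ)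
    (h : ∑ i ∈ s, a i ^ 2 = ∑ i ∈ s, a i) : ∑ i ∈ s, a i ≤ s.card := by
  have heq := (Finset.sum_eq_sum_iff_of_le fun i _ => Int.le_self_sq (a i)).mp h.symm
  have hle : ∀ i ∈ s, a i ≤ 1 := fun i hi => by nlinarith [heq i hi]
  simpa using Finset.sum_le_card_nsmul s a 1 hle

structure IsConicBundleBasis {Pic ι : Type*} [AddCommGroup Pic] [DecidableEq ι]
    (B : Pic →+ Pic →+ ℤ) (n : ℤ) (s f : Pic) (F : ι → Pic) : Prop where
  symm : ∀ x y, B x y = B y x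
  span_eq_top : Submodule.span ℤ (Set.range F ∪ {s, f}) = ⊤
  self_s : B s s = -n
  s_f : B s f = 1
  self_f : B f f = 0
  F_F : ∀ i j, B (F i) (F j) = if i = j then -1 else 0
  f_F : ∀ i, B f (F i) = 0
  s_F : ∀ i, B s (F i) = 0

namespace IsConicBundleBasis

variable {Pic ι : Type*} [AddCommGroup Pic] [Fintype ι] [DecidableEq ι]
  {B : Pic →+ Pic →+ ℤ} {n : ℤ} {s f : Pic} {F : ι → Pic}

/-- The inverse of the Gram matrix of `s, f, Fᵢ`, applied to the coordinates `x·s, x·f, x·Fᵢ`. -/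
theorem apply_eq (hB : IsConicBundleBasis B n s f F) (x y : Pic) :
    B x y = B x f * B y s + B x s * B y f + n * B x f * B y f
      - ∑ i, B x (F i) * B y (F i) := by
  set v := x - B x f • s - (B x s + n * B x f) • f + ∑ i, B x (F i) • F i
  have hBv : ∀ z, B v z = B x z - B x f * B s z - (B x s + n * B x f) * B f z
      + ∑ i, B x (F i) * B (F i) z := by
    intro z
    simp [v, map_sub, map_add, map_zsmul, map_sum]
  have hv : (B v).toIntLinearMap = 0 := by
    refine LinearMap.ext_on hB.span_eq_top ?_
    rintro z (⟨j, rfl⟩ | rfl | rfl)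
    · simp [hBv, hB.s_F, hB.f_F, hB.F_F]
    · simp [hBv, hB.self_s, hB.symm f z, hB.s_f, hB.symm (F _) z, hB.s_F]
      ring
    · simp [hBv, hB.self_f, hB.s_f, hB.symm (F _) z, hB.f_F]
  have := hBv y
  rw [show B v y = 0 from LinearMap.congr_fun hv y, hB.symm s y, hB.symm f y] at this
  simp only [hB.symm (F _) y] at this
  linarith

end IsConicBundleBasis

theorem stmt_14_general {Pic : Type*} [AddCommGroup Pic]
    (n : ℤ) (r : ℕ)
    (B : Pic →+ Pic →+ ℤ)
    (hBsymm : ∀ x y, B x y = B y x)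
    (s f K : Pic) (F : Fin r → Pic)
    (hspan : Submodule.span ℤ (Set.range F ∪ {s, f}) = ⊤)
    (hss : B s s = -n) (hsf : B s f = 1) (hff : B f f = 0)
    (hFF : ∀ i j, B (F i) (F j) = if i = j then -1 else 0)
    (hfF : ∀ i, B f (F i) = 0) (hsF : ∀ i, B s (F i) = 0)
    (hK : K = -((n + 2) • f) - (2 : ℤ) • s + ∑ i, F i)
    (sections : Set Pic)
    (hs : s ∈ sections)
    (hsecf : ∀ t ∈ sections, B t f = 1)
    (hadj : ∀ t ∈ sections, B t (t + K) = -2)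
    (hpos : ∀ t ∈ sections, ∀ t' ∈ sections, t ≠ t' → 0 ≤ B t t')
    (hex : ∃ t ∈ sections, t ≠ s ∧ B t t = -n) :
    2 * n ≤ (r : ℤ) := by
  obtain ⟨t, ht, hts, htt⟩ := hex
  have hB : IsConicBundleBasis B n s f F := ⟨hBsymm, hspan, hss, hsf, hff, hFF, hfF, hsF⟩
  have htf := hsecf t ht
  have hself : B t t = 2 * B t s + n - ∑ i, B t (F i) ^ 2 := by
    rw [hB.apply_eq t t, htf]
    simp only [sq]
    ring
  have htK : B t K = -(n + 2) - 2 * B t s + ∑ i, B t (F i) := by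
    simp [hK, map_sub, map_add, map_neg, map_zsmul, map_sum, htf]
  have hsum_sq : ∑ i, B t (F i) ^ 2 = ∑ i, B t (F i) := by
    have := hadj t ht
    rw [map_add, htK] at this
    linarith
  have hle := Finset.sum_le_card_of_sum_sq_eq_sum Finset.univ (fun i => B t (F i)) hsum_sq
  have hts_nonneg := hpos t ht s hs hts
  simp only [Finset.card_univ, Fintype.card_fin] at hle
  linarith

/-- Let `(S,π)` be a conic bundle which is not a Hirzebruch surface (so `π` has `r ≥ 1`
singular fibres), let `−n` be the minimal self-intersection of sections of `π`, and suppose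
there are two distinct sections of self-intersection `−n`.  Then `r ≥ 2n`.

The geometry is encoded by its Picard-theoretic data, as used in the proof: `Pic S` is
generated by a minimal section `s`, the fibre class `f` and the components `F₁,…,F_r` of the
singular fibres, with the standard intersection numbers, canonical class
`K = −(n+2)f − 2s + ΣFᵢ`; every class `t` of a section satisfies `t·f = 1`, the adjunction
relation `t·(t+K) = −2`, the minimality bound `t·t ≥ −n`, and has non-negative intersection
with the `Fᵢ` and with any other section. -/
theorem stmt_14 {Pic : Type*} [AddCommGroup Pic]
    (n : ℤ) (r : ℕ) (hr : 0 < r)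
    (B : Pic →+ Pic →+ ℤ)
    (hBsymm : ∀ x y, B x y = B y x)
    (s f K : Pic) (F : Fin r → Pic)
    (hspan : Submodule.span ℤ (Set.range F ∪ {s, f}) = ⊤)
    (hss : B s s = -n) (hsf : B s f = 1) (hff : B f f = 0)
    (hFF : ∀ i j, B (F i) (F j) = if i = j then -1 else 0)
    (hfF : ∀ i, B f (F i) = 0) (hsF : ∀ i, B s (F i) = 0)
    (hK : K = -((n + 2) • f) - (2 : ℤ) • s + ∑ i, F i)
    (sections : Set Pic)
    (hs : s ∈ sections)
    (hmin : ∀ t ∈ sections, -n ≤ B t t)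
    (hsecf : ∀ t ∈ sections, B t f = 1)
    (hadj : ∀ t ∈ sections, B t (t + K) = -2)
    (hpos : ∀ t ∈ sections, ∀ t' ∈ sections, t ≠ t' → 0 ≤ B t t')
    (hposF : ∀ t ∈ sections, ∀ i, 0 ≤ B t (F i))
    (hex : ∃ t ∈ sections, t ≠ s ∧ B t t = -n) :
    2 * n ≤ (r : ℤ) :=
  stmt_14_general n r B hBsymm s f K F hspan hss hsf hff hFF hfF hsF hK sections hs hsecf hadj hpos
    hex
end

section
/- Let S be a del Pezzo surface of degree d = 9 − r obtained by blowing up r points of ℙ² in general position (1 ≤ r ≤ 8), and let G ⊂ Aut(S) be a group with Pic(S)^G of rank 1. Then the size of every finite G-orbit on the set of (−1)-curves of S is divisible by d. -/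
/-! The sum of the classes of a `G`-stable set of `(−1)`-curves is `G`-invariant, hence equal to
`a • K`; intersecting with `K` gives `-#O = a * d`. -/

theorem AddEquiv.map_sum_self_of_image_eq {M : Type*} [AddCommMonoid M] [DecidableEq M]
    (f : M ≃+ M) {s : Finset M} (hs : s.image f = s) :
    f (∑ x ∈ s, x) = ∑ x ∈ s, x := by
  calc f (∑ x ∈ s, x) = ∑ x ∈ s.image f, x := by
        rw [map_sum, Finset.sum_image fun _ _ _ _ h => f.injective h]
    _ = ∑ x ∈ s, x := by rw [hs]

theorem card_eq_neg_mul_of_sum_eq_zsmul {M : Type*} [AddCommGroup M] (B : M →+ M →+ ℤ)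
    {K : M} {s : Finset M} (hs : ∀ D ∈ s, B D K = -1) {a : ℤ} (ha : ∑ D ∈ s, D = a • K) :
    (s.card : ℤ) = -a * B K K := by
  have hsum : B (∑ D ∈ s, D) K = -(s.card : ℤ) := by
    rw [map_sum, AddMonoidHom.finsetSum_apply, Finset.sum_congr rfl hs]
    simp
  rw [ha, map_zsmul, AddMonoidHom.smul_apply, smul_eq_mul] at hsum
  linarith

theorem stmt_15_general {Pic : Type*} [AddCommGroup Pic] [DecidableEq Pic]
    (d : ℕ)
    (B : Pic →+ Pic →+ ℤ)
    (K : Pic) (hK : B K K = (d : ℤ))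
    {G : Type*} [Group G] (ρ : G →* Multiplicative (AddAut Pic))
    (hrk1 : ∀ x : Pic, (∀ g : G, Multiplicative.toAdd (ρ g) x = x) → ∃ a : ℤ, x = a • K)
    (O : Finset Pic)
    (hexc : ∀ D ∈ O, B D D = -1 ∧ B D K = -1)
    (hstab : ∀ g : G, O.image (fun D => Multiplicative.toAdd (ρ g) D) = O) :
    (d : ℤ) ∣ (O.card : ℤ) := by
  obtain ⟨a, ha⟩ := hrk1 (∑ D ∈ O, D) fun g =>
    (Multiplicative.toAdd (ρ g)).map_sum_self_of_image_eq (hstab g)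
  refine ⟨-a, ?_⟩
  rw [card_eq_neg_mul_of_sum_eq_zsmul B (fun D hD => (hexc D hD).2) ha, hK, mul_comm]

/-- Let `S` be a del Pezzo surface of degree `d = 9 − r` obtained by blowing up `r` points of
`ℙ²` in general position (`1 ≤ r ≤ 8`), and let `G ⊂ Aut(S)` with `rk Pic(S)^G = 1`.  Then
the size of every finite `G`-orbit on the set of `(−1)`-curves of `S` is divisible by `d`.

The geometry is encoded by its Picard-theoretic data: the intersection form `B` on `Pic S`
with canonical class `K` satisfying `K·K = d`; the action `ρ` of `G` on `Pic S` preserves `B`;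
`rk Pic(S)^G = 1` is expressed (using that `K` is primitive) by saying every `G`-invariant
class is an integral multiple of `K`; a finite orbit `O` of `(−1)`-curves consists of classes
`D` with `D·D = D·K = −1`, is `G`-stable, and `G` acts transitively on it. -/
theorem stmt_15 {Pic : Type*} [AddCommGroup Pic] [DecidableEq Pic]
    (r d : ℕ) (hr1 : 1 ≤ r) (hr8 : r ≤ 8) (hd : (d : ℤ) = 9 - (r : ℤ))
    (B : Pic →+ Pic →+ ℤ) (hBsymm : ∀ x y, B x y = B y x)
    (K : Pic) (hK : B K K = (d : ℤ))
    {G : Type*} [Group G] (ρ : G →* Multiplicative (AddAut Pic))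
    (hBinv : ∀ (g : G) (x y : Pic), B (Multiplicative.toAdd (ρ g) x) (Multiplicative.toAdd (ρ g) y) = B x y)
    (hrk1 : ∀ x : Pic, (∀ g : G, Multiplicative.toAdd (ρ g) x = x) → ∃ a : ℤ, x = a • K)
    (O : Finset Pic)
    (hexc : ∀ D ∈ O, B D D = -1 ∧ B D K = -1)
    (hstab : ∀ g : G, O.image (fun D => Multiplicative.toAdd (ρ g) D) = O)
    (htrans : ∀ D ∈ O, ∀ D' ∈ O, ∃ g : G, Multiplicative.toAdd (ρ g) D = D') :
    (d : ℤ) ∣ (O.card : ℤ) :=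
  stmt_15_general d B K hK ρ hrk1 O hexc hstab
end
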